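/- For integers l ≥ 1 and n ≥ 0, the number of pairs (α, γ) ∈ 𝔽_q[t]² such that α and γ are coprime, deg α ≤ l+n, deg γ ≤ l, and at least one of deg α = l+n or deg γ = l holds, equals (q−1)² · (q^{2l+n} + q^{2l+n−1}). -/
import Mathlib


open Polynomial

section Auxiliary

variable {F : Type} [Field F] [Fintype F]

lemma withbot_lt_succ {x : WithBot ℕ} {N : ℕ} :
    x < ((N + 1 : ℕ) : WithBot ℕ) ↔ x ≤ (N : ℕ) := by
  cases x with
  | bot => simp [bot_lt_iff_ne_bot, WithBot.add_eq_bot]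
  | coe k =>
    rw [Nat.cast_withBot, Nat.cast_withBot, WithBot.coe_lt_coe, WithBot.coe_le_coe]
    exact Nat.lt_succ_iff

lemma withbot_cast_le {a b : ℕ} (h : a ≤ b) :
    ((a : ℕ) : WithBot ℕ) ≤ ((b : ℕ) : WithBot ℕ) := by
  rw [Nat.cast_withBot, Nat.cast_withBot, WithBot.coe_le_coe]; exact h

lemma withbot_eq_succ {x : WithBot ℕ} {c : ℕ} (h1 : x ≤ ((c + 1 : ℕ) : WithBot ℕ))
    (h2 : ¬ x ≤ ((c : ℕ) : WithBot ℕ)) : x = ((c + 1 : ℕ) : WithBot ℕ) := by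
  cases x with
  | bot => exact absurd bot_le h2
  | coe k =>
    rw [Nat.cast_withBot] at h1 h2 ⊢
    rw [WithBot.coe_le_coe] at h1 h2
    rw [WithBot.coe_eq_coe]
    omega

lemma card_degLT (N : ℕ) :
    Nat.card {p : F[X] // p.degree < (N : ℕ)} = (Fintype.card F) ^ N := by
  have e1 : {p : F[X] // p.degree < (N : ℕ)} ≃ degreeLT F N :=
    Equiv.subtypeEquivRight (fun p => (mem_degreeLT).symm)
  rw [Nat.card_congr (e1.trans (degreeLTEquiv F N).toEquiv)]
  simp [Nat.card_eq_fintype_card]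

lemma finite_poly_subtype {P : F[X] → Prop} (D : ℕ) (h : ∀ p, P p → p.degree < (D : ℕ)) :
    Finite {p : F[X] // P p} := by
  have : Finite {p : F[X] // p.degree < (D : ℕ)} := by
    have e1 : {p : F[X] // p.degree < (D : ℕ)} ≃ degreeLT F D :=
      Equiv.subtypeEquivRight (fun p => (mem_degreeLT).symm)
    exact Finite.of_equiv _ ((e1.trans (degreeLTEquiv F D).toEquiv)).symm
  exact Finite.of_injective (fun p => (⟨p.1, h p.1 p.2⟩ : {p : F[X] // p.degree < (D : ℕ)}))
    (fun a b hab => by cases a; cases b; simpa [Subtype.ext_iff] using hab)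

lemma card_ne_subtype {α : Type} [Fintype α] (a : α) :
    Nat.card {x : α // x ≠ a} = Fintype.card α - 1 := by
  classical
  rw [Nat.card_eq_fintype_card]
  have h := Fintype.card_subtype_compl (fun x : α => x = a)
  rw [Fintype.card_subtype_eq] at h
  exact h

lemma isCoprime_of_isUnit_left {R : Type*} [CommSemiring R] {a b : R} (h : IsUnit a) :
    IsCoprime a b :=
  (isCoprime_zero_right.mpr h).of_isCoprime_of_dvd_right (dvd_zero b)

/-- Cardinality of `{α : deg α ≤ D, α coprime to γ}` for a fixed nonzero `γ`,
via Euclidean division by `γ`. -/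
lemma card_coprime_le (γ : F[X]) (hγ : γ ≠ 0) (D : ℕ) (hb : γ.natDegree ≤ D + 1) :
    Nat.card {α : F[X] // IsCoprime α γ ∧ α.degree ≤ (D : ℕ)} =
      (Fintype.card F) ^ (D + 1 - γ.natDegree) *
        Nat.card {r : F[X] // r.degree < γ.degree ∧ IsCoprime r γ} := by
  have hγdeg : γ.degree = (γ.natDegree : ℕ) := degree_eq_natDegree hγ
  have hrD : ∀ r : F[X], r.degree < γ.degree → r.degree ≤ (D : ℕ) := by
    intro r hr
    exact withbot_lt_succ.mp (lt_of_lt_of_le hr (hγdeg ▸ withbot_cast_le hb))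
  set K := {k : F[X] // (k * γ).degree ≤ (D : ℕ)} with hK
  set A := {α : F[X] // IsCoprime α γ ∧ α.degree ≤ (D : ℕ)} with hA
  set R := {r : F[X] // r.degree < γ.degree ∧ IsCoprime r γ} with hR
  have hf : ∀ (x : K × R),
      IsCoprime (x.1.1 * γ + x.2.1) γ ∧ (x.1.1 * γ + x.2.1).degree ≤ (D : ℕ) := by
    rintro ⟨⟨k, hk⟩, ⟨r, hr, hcop⟩⟩
    constructor
    · have := hcop.add_mul_left_left k
      rwa [mul_comm γ k, add_comm] at this
    · exact le_trans (degree_add_le _ _) (max_le hk (hrD r hr))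
  let f : K × R → A := fun x => ⟨x.1.1 * γ + x.2.1, hf x⟩
  have hbij : Function.Bijective f := by
    constructor
    · rintro ⟨⟨k₁, hk₁⟩, ⟨r₁, hr₁, hc₁⟩⟩ ⟨⟨k₂, hk₂⟩, ⟨r₂, hr₂, hc₂⟩⟩ h
      have h' : k₁ * γ + r₁ = k₂ * γ + r₂ := congrArg Subtype.val h
      have hkk : k₁ = k₂ := by
        by_contra hne
        have hsub : (k₁ - k₂) * γ = r₂ - r₁ := by ring_nf; linear_combination h'
        have h1 : ((k₁ - k₂) * γ).degree < γ.degree := by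
          rw [hsub]
          exact lt_of_le_of_lt (degree_sub_le _ _) (max_lt hr₂ hr₁)
        have h2 : γ.degree ≤ ((k₁ - k₂) * γ).degree := by
          rw [degree_mul]
          refine le_add_of_nonneg_left ?_
          rw [zero_le_degree_iff]
          exact sub_ne_zero_of_ne hne
        exact absurd h1 (not_lt_of_ge h2)
      subst hkk
      obtain rfl : r₁ = r₂ := add_left_cancel h'
      rfl
    · rintro ⟨α, hcop, hαD⟩
      refine ⟨⟨⟨α / γ, ?_⟩, ⟨α % γ, EuclideanDomain.mod_lt _ hγ, ?_⟩⟩, ?_⟩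
      · have hmod : γ * (α / γ) + α % γ = α := EuclideanDomain.div_add_mod α γ
        have : (α / γ) * γ = α - α % γ := by rw [mul_comm]; linear_combination hmod
        rw [this]
        exact le_trans (degree_sub_le _ _)
          (max_le hαD (hrD _ (EuclideanDomain.mod_lt _ hγ)))
      · have hmod : γ * (α / γ) + α % γ = α := EuclideanDomain.div_add_mod α γ
        have : α % γ = α + γ * (-(α / γ)) := by linear_combination hmod
        rw [this]
        exact hcop.add_mul_left_left _
      · apply Subtype.ext
        show (α / γ) * γ + α % γ = α
        rw [mul_comm]
        exact EuclideanDomain.div_add_mod α γ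
  have hcardA : Nat.card A = Nat.card K * Nat.card R := by
    rw [← Nat.card_prod, Nat.card_congr (Equiv.ofBijective f hbij)]
  rw [hcardA]
  congr 1
  have eK : K ≃ {k : F[X] // k.degree < ((D + 1 - γ.natDegree : ℕ) : WithBot ℕ)} := by
    refine Equiv.subtypeEquivRight (fun k => ?_)
    by_cases hk0 : k = 0
    · subst hk0
      simp [bot_lt_iff_ne_bot, Nat.cast_withBot]
    · rw [degree_mul, degree_eq_natDegree hk0, hγdeg, ← Nat.cast_add]
      have h1 : ((k.natDegree + γ.natDegree : ℕ) : WithBot ℕ) ≤ ((D : ℕ) : WithBot ℕ) ↔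
          k.natDegree + γ.natDegree ≤ D := by
        rw [Nat.cast_withBot, Nat.cast_withBot]; exact WithBot.coe_le_coe
      have h2 : ((k.natDegree : ℕ) : WithBot ℕ) < ((D + 1 - γ.natDegree : ℕ) : WithBot ℕ) ↔
          k.natDegree < D + 1 - γ.natDegree := by
        rw [Nat.cast_withBot, Nat.cast_withBot]; exact WithBot.coe_lt_coe
      rw [h1, h2]
      omega
  rw [Nat.card_congr eK, card_degLT]

/-- The fiber over `γ = 0` : coprime means `α` is a unit. -/
lemma card_coprime_zero (D : ℕ) :
    Nat.card {α : F[X] // IsCoprime α (0 : F[X]) ∧ α.degree ≤ (D : ℕ)} =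
      Fintype.card F - 1 := by
  have e : {α : F[X] // IsCoprime α (0 : F[X]) ∧ α.degree ≤ (D : ℕ)} ≃ {c : F // c ≠ 0} := by
    refine
      { toFun := fun x => ⟨x.1.coeff 0, ?_⟩
        invFun := fun c => ⟨C c.1, ?_, ?_⟩
        left_inv := ?_
        right_inv := ?_ }
    · have hu : IsUnit x.1 := isCoprime_zero_right.mp x.2.1
      intro h0
      have hx : x.1 = C (x.1.coeff 0) :=
        eq_C_of_degree_le_zero (le_of_eq (isUnit_iff_degree_eq_zero.mp hu))
      rw [h0, map_zero] at hx
      exact hu.ne_zero hx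
    · exact isCoprime_zero_right.mpr (isUnit_C.mpr (isUnit_iff_ne_zero.mpr c.2))
    · refine le_trans (degree_C_le) ?_
      rw [Nat.cast_withBot]
      exact WithBot.coe_le_coe.mpr (Nat.zero_le D)
    · rintro ⟨α, hcop, hD⟩
      apply Subtype.ext
      have hu : IsUnit α := isCoprime_zero_right.mp hcop
      exact (eq_C_of_degree_le_zero (le_of_eq (isUnit_iff_degree_eq_zero.mp hu))).symm
    · rintro ⟨c, hc⟩
      apply Subtype.ext
      exact coeff_C_zero
  rw [Nat.card_congr e]
  exact card_ne_subtype (0 : F)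

/-- The main counting type : coprime pairs with separate degree bounds. -/
def CP (F : Type) [Field F] (d m : ℕ) : Type :=
  {p : F[X] × F[X] // IsCoprime p.1 p.2 ∧ p.1.degree ≤ (d : ℕ) ∧ p.2.degree ≤ (m : ℕ)}

lemma CP_symm (d m : ℕ) : Nat.card (CP F d m) = Nat.card (CP F m d) := by
  refine Nat.card_congr
    { toFun := fun p => ⟨(p.1.2, p.1.1), p.2.1.symm, p.2.2.2, p.2.2.1⟩
      invFun := fun p => ⟨(p.1.2, p.1.1), p.2.1.symm, p.2.2.2, p.2.2.1⟩
      left_inv := fun p => rfl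
      right_inv := fun p => rfl }

lemma CP_sigma (D m : ℕ) :
    ∃ (G : Type) (_ : Fintype G) (γv : G → F[X]) (γ0 : G),
      γv γ0 = 0 ∧ Function.Injective γv ∧
      (∀ γ : G, (γv γ).degree ≤ (m : ℕ)) ∧
      (∀ g : F[X], g.degree ≤ (m : ℕ) → ∃ γ, γv γ = g) ∧
      True := by
  classical
  have : Finite {g : F[X] // g.degree ≤ (m : ℕ)} :=
    finite_poly_subtype (m + 1) (fun p hp => withbot_lt_succ.mpr hp)
  letI : Fintype {g : F[X] // g.degree ≤ (m : ℕ)} := Fintype.ofFinite _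
  exact ⟨{g : F[X] // g.degree ≤ (m : ℕ)}, inferInstance, Subtype.val,
    ⟨0, by simp⟩, rfl, Subtype.val_injective, fun γ => γ.2,
    fun g hg => ⟨⟨g, hg⟩, rfl⟩, trivial⟩

/-- The recurrence `C(d+1, m) = q * C(d, m) - (q-1)^2 + ...` in additive form. -/
lemma CP_rec (d m : ℕ) (hm : m ≤ d + 1) :
    Nat.card (CP F (d + 1) m) + Fintype.card F * (Fintype.card F - 1) =
      Fintype.card F * Nat.card (CP F d m) + (Fintype.card F - 1) := by
  classical
  set q := Fintype.card F with hq
  have hGfin : Finite {g : F[X] // g.degree ≤ (m : ℕ)} :=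
    finite_poly_subtype (m + 1) (fun p hp => withbot_lt_succ.mpr hp)
  letI : Fintype {g : F[X] // g.degree ≤ (m : ℕ)} := Fintype.ofFinite _
  set G := {g : F[X] // g.degree ≤ (m : ℕ)} with hG
  let B : ℕ → G → Type := fun D γ => {α : F[X] // IsCoprime α γ.1 ∧ α.degree ≤ (D : ℕ)}
  have hBfin : ∀ D γ, Finite (B D γ) := fun D γ =>
    finite_poly_subtype (D + 1) (fun p hp => withbot_lt_succ.mpr hp.2)
  letI : ∀ D γ, Fintype (B D γ) := fun D γ => Fintype.ofFinite _
  have hsig : ∀ D : ℕ, Nat.card (CP F D m) = ∑ γ : G, Nat.card (B D γ) := by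
    intro D
    have e : CP F D m ≃ Σ γ : G, B D γ :=
      { toFun := fun p => ⟨⟨p.1.2, p.2.2.2⟩, ⟨p.1.1, p.2.1, p.2.2.1⟩⟩
        invFun := fun x => ⟨(x.2.1, x.1.1), x.2.2.1, x.2.2.2, x.1.2⟩
        left_inv := fun p => rfl
        right_inv := fun x => rfl }
    rw [Nat.card_congr e, Nat.card_eq_fintype_card, Fintype.card_sigma]
    exact Finset.sum_congr rfl (fun γ _ => (Nat.card_eq_fintype_card).symm)
  let γ0 : G := ⟨0, by simp⟩
  have hB0 : ∀ D : ℕ, Nat.card (B D γ0) = q - 1 := fun D => card_coprime_zero D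
  have hstep : ∀ γ : G, γ ≠ γ0 → Nat.card (B (d + 1) γ) = q * Nat.card (B d γ) := by
    intro γ hne
    have hγne : γ.1 ≠ 0 := fun h => hne (Subtype.ext h)
    have hbd : γ.1.natDegree ≤ d + 1 := by
      have h1 : γ.1.natDegree ≤ m := natDegree_le_iff_degree_le.mpr γ.2
      omega
    show Nat.card {α : F[X] // IsCoprime α γ.1 ∧ α.degree ≤ ((d + 1 : ℕ) : WithBot ℕ)} = _
    rw [card_coprime_le γ.1 hγne (d + 1) (by omega), card_coprime_le γ.1 hγne d hbd]
    have h2 : d + 1 + 1 - γ.1.natDegree = (d + 1 - γ.1.natDegree) + 1 := by omega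
    rw [h2, pow_succ]
    ring
  rw [hsig (d + 1), hsig d]
  rw [← Finset.add_sum_erase Finset.univ _ (Finset.mem_univ γ0),
    ← Finset.add_sum_erase Finset.univ (fun γ => Nat.card (B d γ)) (Finset.mem_univ γ0)]
  rw [hB0, hB0]
  have e3 : ∑ γ ∈ Finset.univ.erase γ0, Nat.card (B (d + 1) γ) =
      q * ∑ γ ∈ Finset.univ.erase γ0, Nat.card (B d γ) := by
    rw [Finset.mul_sum]
    exact Finset.sum_congr rfl (fun γ hγ => hstep γ (Finset.ne_of_mem_erase hγ))
  rw [e3]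
  generalize (q - 1) = s
  ring

lemma CP_base : Nat.card (CP F 0 0) = Fintype.card F ^ 2 - 1 := by
  classical
  have hx : ∀ p : F[X], p.degree ≤ ((0 : ℕ) : WithBot ℕ) → p = C (p.coeff 0) := by
    intro p hp
    exact eq_C_of_degree_le_zero (by exact_mod_cast hp)
  have e : CP F 0 0 ≃ {v : F × F // v ≠ 0} := by
    refine
      { toFun := fun p => ⟨(p.1.1.coeff 0, p.1.2.coeff 0), ?_⟩
        invFun := fun v => ⟨(C v.1.1, C v.1.2), ?_, degree_C_le.trans (by simp), degree_C_le.trans (by simp)⟩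
        left_inv := ?_
        right_inv := ?_ }
    · intro h0
      have h1 : p.1.1 = 0 := by
        rw [hx p.1.1 p.2.2.1, show p.1.1.coeff 0 = 0 from congrArg Prod.fst h0, map_zero]
      have h2 : p.1.2 = 0 := by
        rw [hx p.1.2 p.2.2.2, show p.1.2.coeff 0 = 0 from congrArg Prod.snd h0, map_zero]
      have := p.2.1
      rw [h1, h2] at this
      exact not_isUnit_zero (isCoprime_zero_right.mp this)
    · by_cases h1 : v.1.1 = 0
      · have h2 : v.1.2 ≠ 0 := by
          intro h2
          exact v.2 (Prod.ext h1 h2)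
        exact (isCoprime_of_isUnit_left (isUnit_C.mpr (isUnit_iff_ne_zero.mpr h2))).symm
      · exact isCoprime_of_isUnit_left (isUnit_C.mpr (isUnit_iff_ne_zero.mpr h1))
    · rintro ⟨⟨a, b⟩, hc, ha, hb⟩
      apply Subtype.ext
      exact Prod.ext (hx a ha).symm (hx b hb).symm
    · rintro ⟨⟨x, y⟩, hv⟩
      apply Subtype.ext
      simp
  rw [Nat.card_congr e]
  have h := card_ne_subtype ((0 : F × F))
  rw [Fintype.card_prod] at h
  rw [h, pow_two]

lemma CP_card (d m : ℕ) :
    Nat.card (CP F d m) =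
      (Fintype.card F - 1) * ((Fintype.card F) ^ (d + m + 1) + 1) := by
  classical
  set q := Fintype.card F with hq
  have key : ∀ N d m : ℕ, d + m ≤ N →
      Nat.card (CP F d m) = (q - 1) * (q ^ (d + m + 1) + 1) := by
    intro N
    induction N with
    | zero =>
      intro d m h
      obtain ⟨rfl, rfl⟩ : d = 0 ∧ m = 0 := by omega
      rw [CP_base, ← hq]
      have hq1 : 1 ≤ q := Fintype.card_pos
      obtain ⟨s, hs⟩ := Nat.exists_eq_add_of_le hq1
      rw [hs]
      have h1 : 1 + s - 1 = s := by omega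
      rw [h1]
      have h2 : (1 + s) ^ 2 = s * ((1 + s) ^ (0 + 0 + 1) + 1) + 1 := by ring
      omega
    | succ N ih =>
      intro d m h
      by_cases hdm : m ≤ d
      · match d, hdm with
        | 0, hdm =>
          obtain rfl : m = 0 := by omega
          exact ih 0 0 (by omega)
        | (d' + 1), hdm =>
          have hrec := CP_rec (F := F) d' m (by omega)
          rw [← hq] at hrec
          have hih := ih d' m (by omega)
          rw [hih] at hrec
          have hiden : (q - 1) * (q ^ (d' + m + 1 + 1) + 1) + q * (q - 1) =
              q * ((q - 1) * (q ^ (d' + m + 1) + 1)) + (q - 1) := by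
            generalize (q - 1) = s
            rw [pow_succ]
            ring
          have hE : d' + 1 + m + 1 = d' + m + 1 + 1 := by omega
          rw [hE]
          omega
      · have hsymm := CP_symm (F := F) d m
        push_neg at hdm
        match m, hdm with
        | (m' + 1), hdm =>
          have hrec := CP_rec (F := F) m' d (by omega)
          rw [← hq] at hrec
          have hih := ih m' d (by omega)
          rw [hih] at hrec
          have hiden : (q - 1) * (q ^ (m' + d + 1 + 1) + 1) + q * (q - 1) =
              q * ((q - 1) * (q ^ (m' + d + 1) + 1)) + (q - 1) := by
            generalize (q - 1) = s
            rw [pow_succ]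
            ring
          have hE : d + (m' + 1) + 1 = m' + d + 1 + 1 := by omega
          rw [hsymm, hE]
          omega
  exact key (d + m) d m le_rfl

open Classical in
noncomputable def subtype_sum_split {X : Type} (P Q : X → Prop) :
    {x : X // P x} ≃ {x : X // P x ∧ Q x} ⊕ {x : X // P x ∧ ¬ Q x} := by
  refine
    { toFun := fun x => if h : Q x.1 then .inl ⟨x.1, x.2, h⟩ else .inr ⟨x.1, x.2, h⟩
      invFun := Sum.elim (fun y => ⟨y.1, y.2.1⟩) (fun y => ⟨y.1, y.2.1⟩)
      left_inv := ?_
      right_inv := ?_ }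
  · intro x
    by_cases h : Q x.1 <;> simp [h]
  · rintro (y | y)
    · simp [y.2.2]
    · simp [y.2.2]

end Auxiliary

/-- For `l ≥ 1` and `n ≥ 0`, the number of pairs `(α, γ)` of coprime polynomials over
`𝔽_q` with `deg α ≤ l+n`, `deg γ ≤ l`, and `deg α = l+n` or `deg γ = l`, equals
`(q−1)² · (q^(2l+n) + q^(2l+n−1))`. -/
theorem card_coprime_pairs_with_max_degree
    (F : Type) [Field F] [Fintype F] (q : ℕ) (hq : Fintype.card F = q)
    (l n : ℕ) (hl : 1 ≤ l) :
    Nat.card {p : F[X] × F[X] //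
        IsCoprime p.1 p.2 ∧ p.1.degree ≤ (l + n : ℕ) ∧ p.2.degree ≤ (l : ℕ) ∧
        (p.1.degree = (l + n : ℕ) ∨ p.2.degree = (l : ℕ))} =
      (q - 1) ^ 2 * (q ^ (2 * l + n) + q ^ (2 * l + n - 1)) := by
  classical
  subst hq
  set q := Fintype.card F with hq
  set P : F[X] × F[X] → Prop := fun p =>
    IsCoprime p.1 p.2 ∧ p.1.degree ≤ ((l + n : ℕ) : WithBot ℕ) ∧
      p.2.degree ≤ ((l : ℕ) : WithBot ℕ) with hP
  set Q : F[X] × F[X] → Prop := fun p =>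
    p.1.degree ≤ ((l + n - 1 : ℕ) : WithBot ℕ) ∧ p.2.degree ≤ ((l - 1 : ℕ) : WithBot ℕ)
    with hQdef
  -- the target set is {P ∧ ¬ Q}
  have eT : {p : F[X] × F[X] //
      IsCoprime p.1 p.2 ∧ p.1.degree ≤ ((l + n : ℕ) : WithBot ℕ) ∧
        p.2.degree ≤ ((l : ℕ) : WithBot ℕ) ∧
        (p.1.degree = ((l + n : ℕ) : WithBot ℕ) ∨ p.2.degree = ((l : ℕ) : WithBot ℕ))} ≃
      {p : F[X] × F[X] // P p ∧ ¬ Q p} := by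
    refine Equiv.subtypeEquivRight (fun p => ?_)
    constructor
    · rintro ⟨hc, h1, h2, h3⟩
      refine ⟨⟨hc, h1, h2⟩, ?_⟩
      rintro ⟨hq1, hq2⟩
      rcases h3 with h3 | h3
      · rw [h3] at hq1
        rw [Nat.cast_withBot, Nat.cast_withBot, WithBot.coe_le_coe] at hq1
        omega
      · rw [h3] at hq2
        rw [Nat.cast_withBot, Nat.cast_withBot, WithBot.coe_le_coe] at hq2
        omega
    · rintro ⟨⟨hc, h1, h2⟩, hnq⟩
      refine ⟨hc, h1, h2, ?_⟩
      have hnq' : p.1.degree ≤ ((l + n - 1 : ℕ) : WithBot ℕ) →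
          ¬ p.2.degree ≤ ((l - 1 : ℕ) : WithBot ℕ) := not_and.mp hnq
      by_cases hq1 : p.1.degree ≤ ((l + n - 1 : ℕ) : WithBot ℕ)
      · right
        have hq2 := hnq' hq1
        have hl' : l = (l - 1) + 1 := by omega
        rw [hl'] at h2 ⊢
        exact withbot_eq_succ h2 hq2
      · left
        have hln : l + n = (l + n - 1) + 1 := by omega
        rw [hln] at h1 ⊢
        exact withbot_eq_succ h1 hq1
  have hsplit := subtype_sum_split P Q
  -- finiteness
  have hfin1 : Finite {p : F[X] × F[X] // P p ∧ Q p} := by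
    have : Finite ({p : F[X] // p.degree < ((l + n + 1 : ℕ) : WithBot ℕ)} ×
        {p : F[X] // p.degree < ((l + 1 : ℕ) : WithBot ℕ)}) := by
      have f1 : Finite {p : F[X] // p.degree < ((l + n + 1 : ℕ) : WithBot ℕ)} :=
        finite_poly_subtype _ (fun p hp => hp)
      have f2 : Finite {p : F[X] // p.degree < ((l + 1 : ℕ) : WithBot ℕ)} :=
        finite_poly_subtype _ (fun p hp => hp)
      exact Finite.instProd
    refine Finite.of_injective (fun x =>
      ((⟨x.1.1, withbot_lt_succ.mpr x.2.1.2.1⟩, ⟨x.1.2, withbot_lt_succ.mpr x.2.1.2.2⟩) :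
        {p : F[X] // p.degree < ((l + n + 1 : ℕ) : WithBot ℕ)} ×
        {p : F[X] // p.degree < ((l + 1 : ℕ) : WithBot ℕ)})) ?_
    rintro ⟨⟨a1, a2⟩, ha⟩ ⟨⟨b1, b2⟩, hb⟩ hab
    simp only [Prod.mk.injEq, Subtype.mk.injEq] at hab
    exact Subtype.ext (Prod.ext hab.1 hab.2)
  have hfin2 : Finite {p : F[X] × F[X] // P p ∧ ¬ Q p} := by
    have : Finite ({p : F[X] // p.degree < ((l + n + 1 : ℕ) : WithBot ℕ)} ×
        {p : F[X] // p.degree < ((l + 1 : ℕ) : WithBot ℕ)}) := by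
      have f1 : Finite {p : F[X] // p.degree < ((l + n + 1 : ℕ) : WithBot ℕ)} :=
        finite_poly_subtype _ (fun p hp => hp)
      have f2 : Finite {p : F[X] // p.degree < ((l + 1 : ℕ) : WithBot ℕ)} :=
        finite_poly_subtype _ (fun p hp => hp)
      exact Finite.instProd
    refine Finite.of_injective (fun x =>
      ((⟨x.1.1, withbot_lt_succ.mpr x.2.1.2.1⟩, ⟨x.1.2, withbot_lt_succ.mpr x.2.1.2.2⟩) :
        {p : F[X] // p.degree < ((l + n + 1 : ℕ) : WithBot ℕ)} ×
        {p : F[X] // p.degree < ((l + 1 : ℕ) : WithBot ℕ)})) ?_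
    rintro ⟨⟨a1, a2⟩, ha⟩ ⟨⟨b1, b2⟩, hb⟩ hab
    simp only [Prod.mk.injEq, Subtype.mk.injEq] at hab
    exact Subtype.ext (Prod.ext hab.1 hab.2)
  have hsum : Nat.card {p : F[X] × F[X] // P p} =
      Nat.card {p : F[X] × F[X] // P p ∧ Q p} +
        Nat.card {p : F[X] × F[X] // P p ∧ ¬ Q p} := by
    rw [Nat.card_congr hsplit, Nat.card_sum]
  -- identify with CP
  have hBig : Nat.card {p : F[X] × F[X] // P p} = Nat.card (CP F (l + n) l) := rfl
  have hSmall : Nat.card {p : F[X] × F[X] // P p ∧ Q p} =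
      Nat.card (CP F (l + n - 1) (l - 1)) := by
    refine Nat.card_congr (Equiv.subtypeEquivRight (fun p => ?_))
    constructor
    · rintro ⟨⟨hc, _, _⟩, h1, h2⟩
      exact ⟨hc, h1, h2⟩
    · rintro ⟨hc, h1, h2⟩
      exact ⟨⟨hc, h1.trans (withbot_cast_le (by omega)), h2.trans (withbot_cast_le (by omega))⟩,
        h1, h2⟩
  rw [Nat.card_congr eT]
  have hCBig := CP_card (F := F) (l + n) l
  have hCSmall := CP_card (F := F) (l + n - 1) (l - 1)
  rw [← hq] at hCBig hCSmall
  rw [hBig, hCBig] at hsum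
  rw [hSmall, hCSmall] at hsum
  -- final arithmetic
  have hq1 : 1 ≤ q := Fintype.card_pos
  obtain ⟨s, hs⟩ := Nat.exists_eq_add_of_le hq1
  have hsq : q - 1 = s := by omega
  have hE1 : l + n + l + 1 = (2 * l + n - 1) + 2 := by omega
  have hE2 : l + n - 1 + (l - 1) + 1 = 2 * l + n - 1 := by omega
  have hE3 : 2 * l + n = (2 * l + n - 1) + 1 := by omega
  rw [hE1, hE2, hsq] at hsum
  rw [hE3, hsq]
  set a := 2 * l + n - 1 with ha
  have hE4 : a + 1 - 1 = a := by omega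
  rw [hE4]
  have hiden : s * (q ^ (a + 2) + 1) = s ^ 2 * (q ^ (a + 1) + q ^ a) + s * (q ^ a + 1) := by
    rw [hs]
    ring
  omega
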